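/- Let c¹, c² ∈ ℕ₊ⁿ define a BUCO instance and let (H, c1, c2) be the associated MSp instance. For every spanner S of H that contains every edge e with c1(e) = 0 and does not contain the edge {s,t}, the stretch factor satisfies f2(S) = d^S_{c2}(s,t)/d^E_{c2}(s,t) = d^S_{c2}(s,t); in particular d^E_{c2}(s,t) = 1. -/

import Mathlib

namespace MSpPaper

open SimpleGraph

variable {V : Type*}

/-- Minimum total `c2`-weight of a walk from `u` to `v` using only edges in `F`
(the set of weights of such walks is a set of naturals; its infimum is `0` when no walk exists). -/
noncomputable def wdist (F : Set (Sym2 V)) (c2 : Sym2 V → ℕ) (u v : V) : ℕ :=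
  sInf (Set.range fun p : (SimpleGraph.fromEdgeSet F).Walk u v => (p.edges.map c2).sum)

/-- `S` is a spanner of `G`: a subset of the edges such that the resulting subgraph is connected. -/
def IsSpanner (G : SimpleGraph V) (S : Set (Sym2 V)) : Prop :=
  S ⊆ G.edgeSet ∧ (SimpleGraph.fromEdgeSet S).Connected

/-- First objective: total `c1`-cost of the spanner. -/
def f1 (c1 : Sym2 V → ℤ) (S : Finset (Sym2 V)) : ℤ := ∑ e ∈ S, c1 e

open scoped Classical in
/-- Second objective (stretch factor): maximum over pairs of distinct vertices of the
distance ratio `d^S(u,v)/d^E(u,v)` (junk value `0` if there is no pair of distinct vertices). -/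
noncomputable def f2 [Fintype V] (E S : Set (Sym2 V)) (c2 : Sym2 V → ℕ) : ℚ :=
  if h : ((Finset.univ : Finset (V × V)).filter fun p => p.1 ≠ p.2).Nonempty then
    ((Finset.univ : Finset (V × V)).filter fun p => p.1 ≠ p.2).sup' h
      (fun p => (wdist S c2 p.1 p.2 : ℚ) / (wdist E c2 p.1 p.2 : ℚ))
  else 0

/-- The value vector of a spanner. -/
noncomputable def valueVec [Fintype V] (G : SimpleGraph V) (c1 : Sym2 V → ℤ) (c2 : Sym2 V → ℕ)
    (S : Finset (Sym2 V)) : ℚ × ℚ :=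
  ((f1 c1 S : ℚ), f2 G.edgeSet (↑S) c2)

/-- `y'` dominates `y`: componentwise `≤` and unequal. -/
def Dominates (y' y : ℚ × ℚ) : Prop := y' ≤ y ∧ y' ≠ y

/-- The non-dominated set of an MSp instance. -/
def YN [Fintype V] (G : SimpleGraph V) (c1 : Sym2 V → ℤ) (c2 : Sym2 V → ℕ) : Set (ℚ × ℚ) :=
  {y | (∃ S : Finset (Sym2 V), IsSpanner G (↑S) ∧ valueVec G c1 c2 S = y) ∧
       ∀ S' : Finset (Sym2 V), IsSpanner G (↑S') → ¬ Dominates (valueVec G c1 c2 S') y}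


/-! ### The MSp instance associated with a BUCO instance (Section 4)

A BUCO instance is given by vectors `a = c¹` and `b = c²` in `ℕ₊ⁿ`; feasible
solutions are `x : Fin n → Bool` (`x i = true` meaning `x_i = 1`). -/

/-- Vertices of the graph `H`: for each `i`, the vertex `(i,0)` is `v_i`, `(i,1)` is `v_i'`,
and `(i,2)` is `w_i`. -/
abbrev Vtx (n : ℕ) := Fin n × Fin 3

/-- The weights `(c1, c2)` of the (ordered) pair `x y` of vertices of `H`;
`(0, 0)` (in particular `c2 = 0`) marks non-edges.
Here `M = (∑ i, a i) + 1`. -/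
def wtB (n : ℕ) (a b : Fin n → ℕ) (x y : Vtx n) : ℤ × ℕ :=
  if x.2 = 0 ∧ y.2 = 2 ∧ x.1 = y.1 then (0, b x.1 + 2)
  else if x.2 = 0 ∧ y.2 = 1 ∧ x.1 = y.1 then (0, 1)
  else if x.2 = 1 ∧ y.2 = 2 ∧ x.1 = y.1 then ((a x.1 : ℤ), 1)
  else if x.2 = 2 ∧ y.2 = 0 ∧ (y.1 : ℕ) = (x.1 : ℕ) + 1 then (0, 1)
  else if x.2 = 0 ∧ y.2 = 2 ∧ (x.1 : ℕ) = 0 ∧ (y.1 : ℕ) = n - 1 ∧ x.1 ≠ y.1 then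
    (((∑ i, a i : ℕ) : ℤ) + 1, 1)
  else (0, 0)

/-- The cost function `c1` of `H`. -/
def c1B (n : ℕ) (a b : Fin n → ℕ) : Sym2 (Vtx n) → ℤ :=
  Sym2.lift ⟨fun x y => (wtB n a b x y).1 + (wtB n a b y x).1, fun _ _ => add_comm _ _⟩

/-- The length function `c2` of `H`. -/
def c2B (n : ℕ) (a b : Fin n → ℕ) : Sym2 (Vtx n) → ℕ :=
  Sym2.lift ⟨fun x y => (wtB n a b x y).2 + (wtB n a b y x).2, fun _ _ => add_comm _ _⟩

/-- The edge set of `H`: exactly the pairs with positive length. -/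
def EB (n : ℕ) (a b : Fin n → ℕ) : Set (Sym2 (Vtx n)) := {e | c2B n a b e ≠ 0}

/-- The graph `H` associated with the BUCO instance `(a, b)`. -/
def HB (n : ℕ) (a b : Fin n → ℕ) : SimpleGraph (Vtx n) :=
  SimpleGraph.fromEdgeSet (EB n a b)

/-- The vertex `v_i`. -/
def vB (n : ℕ) (i : Fin n) : Vtx n := (i, 0)
/-- The vertex `v_i'`. -/
def pB (n : ℕ) (i : Fin n) : Vtx n := (i, 1)
/-- The vertex `w_i`. -/
def wB (n : ℕ) (i : Fin n) : Vtx n := (i, 2)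
/-- The vertex `s = v_1`. -/
def sB (n : ℕ) (hn : 0 < n) : Vtx n := (⟨0, hn⟩, 0)
/-- The vertex `t = w_n`. -/
def tB (n : ℕ) (hn : 0 < n) : Vtx n := (⟨n - 1, Nat.sub_lt hn one_pos⟩, 2)

open scoped Classical in
/-- The spanner `S_x` of `H` associated with a BUCO solution `x`: all edges of zero
`c1`-cost together with the edges `{v_i', w_i}` for every `i` with `x_i = 0`. -/
noncomputable def Sx (n : ℕ) (a b : Fin n → ℕ) (x : Fin n → Bool) : Finset (Sym2 (Vtx n)) :=
  (Finset.univ.filter fun e => e ∈ (HB n a b).edgeSet ∧ c1B n a b e = 0) ∪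
    (Finset.univ.filter fun i : Fin n => x i = false).image fun i => s(pB n i, wB n i)

/-- The value vector `(-c¹ᵀx, c²ᵀx)` of a BUCO solution `x`, as a vector in `ℚ²`. -/
def bucoVal (n : ℕ) (a b : Fin n → ℕ) (x : Fin n → Bool) : ℚ × ℚ :=
  (-(∑ i, if x i then (a i : ℚ) else 0), ∑ i, if x i then (b i : ℚ) else 0)

/-!
Without the edge `{s, t}`, the spanner `S` lives on the path `v₁ ⇝ w₁ → v₂ ⇝ ⋯ ⇝ wₙ`, where
the segment `vᵢ ⇝ wᵢ` has `S`-length `mᵢ = 2` if `{vᵢ', wᵢ} ∈ S` and `mᵢ = c²ᵢ + 2` otherwise.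
The potential `φ` given by the prefix sums of these lengths changes along every edge of `S` by at
most its `c2`-length, so `d^S(s, t) ≥ φ(t)`, while walking along the path gives
`d^S(s, x) ≤ φ(x) ≤ φ(t)`. Hence pairs with `d^E(u, v) ≥ 2` have ratio at most `2 φ(t) / 2`,
and pairs with `d^E(u, v) = 1` are edges of length one, each of which `S` bridges within
`mᵢ + 1 ≤ φ(t)`, except `{s, t}` itself, for which `d^E(s, t) = 1`.
-/

section WeightedDistance

def walkWeight (c2 : Sym2 V → ℕ) {G : SimpleGraph V} {u v : V} (p : G.Walk u v) : ℕ :=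
  (p.edges.map c2).sum

variable {F : Set (Sym2 V)} {c2 : Sym2 V → ℕ} {u v w : V}

@[simp]
lemma walkWeight_nil {G : SimpleGraph V} : walkWeight c2 (Walk.nil : G.Walk u u) = 0 := rfl

@[simp]
lemma walkWeight_cons {G : SimpleGraph V} (h : G.Adj u v) (p : G.Walk v w) :
    walkWeight c2 (Walk.cons h p) = c2 s(u, v) + walkWeight c2 p := by
  simp [walkWeight]

@[simp]
lemma walkWeight_reverse {G : SimpleGraph V} (p : G.Walk u v) :
    walkWeight c2 p.reverse = walkWeight c2 p := by
  simp [walkWeight, List.sum_reverse]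

@[simp]
lemma walkWeight_append {G : SimpleGraph V} (p : G.Walk u v) (q : G.Walk v w) :
    walkWeight c2 (p.append q) = walkWeight c2 p + walkWeight c2 q := by
  simp [walkWeight]

lemma wdist_le_walkWeight (p : (fromEdgeSet F).Walk u v) : wdist F c2 u v ≤ walkWeight c2 p :=
  Nat.sInf_le ⟨p, rfl⟩

lemma exists_walkWeight_eq_wdist (h : (fromEdgeSet F).Reachable u v) :
    ∃ p : (fromEdgeSet F).Walk u v, walkWeight c2 p = wdist F c2 u v := by
  obtain ⟨p⟩ := h
  exact Nat.sInf_mem (Set.range_nonempty_iff_nonempty.2 ⟨p⟩)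

lemma wdist_comm : wdist F c2 u v = wdist F c2 v u := by
  change sInf (Set.range (walkWeight c2)) = sInf (Set.range (walkWeight c2))
  rw [← Walk.reverse_surjective.range_comp (walkWeight c2 : (fromEdgeSet F).Walk v u → ℕ)]
  simp [Function.comp_def]

lemma wdist_self : wdist F c2 u u = 0 :=
  Nat.le_zero.1 (wdist_le_walkWeight Walk.nil)

lemma wdist_triangle (huv : (fromEdgeSet F).Reachable u v) (hvw : (fromEdgeSet F).Reachable v w) :
    wdist F c2 u w ≤ wdist F c2 u v + wdist F c2 v w := by
  obtain ⟨p, hp⟩ := exists_walkWeight_eq_wdist (c2 := c2) huv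
  obtain ⟨q, hq⟩ := exists_walkWeight_eq_wdist (c2 := c2) hvw
  calc wdist F c2 u w ≤ walkWeight c2 (p.append q) := wdist_le_walkWeight _
    _ = _ := by rw [walkWeight_append, hp, hq]

lemma wdist_le_of_mem (he : s(u, v) ∈ F) (huv : u ≠ v) : wdist F c2 u v ≤ c2 s(u, v) := by
  simpa using wdist_le_walkWeight (c2 := c2) ((fromEdgeSet_adj F).2 ⟨he, huv⟩).toWalk

lemma le_add_wdist_of_forall_adj (φ : V → ℕ)
    (hφ : ∀ x y, (fromEdgeSet F).Adj x y → φ y ≤ φ x + c2 s(x, y))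
    (h : (fromEdgeSet F).Reachable u v) : φ v ≤ φ u + wdist F c2 u v := by
  obtain ⟨p, hp⟩ := exists_walkWeight_eq_wdist (c2 := c2) h
  rw [← hp]
  clear hp h
  induction p with
  | nil => simp
  | cons hadj q ih =>
    rw [walkWeight_cons]
    have := hφ _ _ hadj
    omega

section PositiveWeights

variable (hpos : ∀ e ∈ F, c2 e ≠ 0)
include hpos

lemma one_le_wdist (huv : u ≠ v) (h : (fromEdgeSet F).Reachable u v) : 1 ≤ wdist F c2 u v := by
  obtain ⟨p, hp⟩ := exists_walkWeight_eq_wdist (c2 := c2) h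
  rw [← hp]
  cases p with
  | nil => exact absurd rfl huv
  | cons hadj q =>
    have := hpos _ ((fromEdgeSet_adj F).1 hadj).1
    rw [walkWeight_cons]
    omega

lemma c2_eq_one_of_wdist_eq_one (huv : u ≠ v) (h : (fromEdgeSet F).Reachable u v)
    (h1 : wdist F c2 u v = 1) : c2 s(u, v) = 1 := by
  obtain ⟨p, hp⟩ := exists_walkWeight_eq_wdist (c2 := c2) h
  rw [h1] at hp
  cases p with
  | nil => exact absurd rfl huv
  | cons hadj q =>
    have := hpos _ ((fromEdgeSet_adj F).1 hadj).1
    cases q with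
    | nil => simpa using hp
    | cons hadj' r =>
      have := hpos _ ((fromEdgeSet_adj F).1 hadj').1
      simp only [walkWeight_cons] at hp
      omega

end PositiveWeights

lemma f2_eq_of_forall_le [Fintype V] {E S : Set (Sym2 V)} {u₀ v₀ : V} (h₀ : u₀ ≠ v₀)
    (hle : ∀ u v, u ≠ v →
      (wdist S c2 u v : ℚ) / wdist E c2 u v ≤ (wdist S c2 u₀ v₀ : ℚ) / wdist E c2 u₀ v₀) :
    f2 E S c2 = (wdist S c2 u₀ v₀ : ℚ) / wdist E c2 u₀ v₀ := by
  classical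
  have hmem : (u₀, v₀) ∈ (Finset.univ : Finset (V × V)).filter fun p => p.1 ≠ p.2 := by
    simpa using h₀
  rw [f2, dif_pos ⟨_, hmem⟩]
  exact le_antisymm (Finset.sup'_le _ _ fun p hp => hle _ _ (Finset.mem_filter.1 hp).2)
    (Finset.le_sup' (fun p : V × V => (wdist S c2 p.1 p.2 : ℚ) / wdist E c2 p.1 p.2) hmem)

lemma IsSpanner.reachable {G : SimpleGraph V} (h : IsSpanner G F) (u v : V) :
    (fromEdgeSet F).Reachable u v :=
  h.2.preconnected u v

lemma IsSpanner.reachable_edgeSet {G : SimpleGraph V} (h : IsSpanner G F) (u v : V) :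
    (fromEdgeSet G.edgeSet).Reachable u v :=
  (h.reachable u v).mono (fromEdgeSet_mono h.1)

end WeightedDistance

section Construction

variable {n : ℕ} {a b : Fin n → ℕ}

lemma c2B_mk (x y : Vtx n) : c2B n a b s(x, y) = (wtB n a b x y).2 + (wtB n a b y x).2 := rfl

lemma mem_edgeSet_HB {x y : Vtx n} :
    s(x, y) ∈ (HB n a b).edgeSet ↔ c2B n a b s(x, y) ≠ 0 ∧ x ≠ y := by
  simp [HB, EB]

lemma c2B_ne_zero_of_mem_edgeSet : ∀ e ∈ (HB n a b).edgeSet, c2B n a b e ≠ 0 := by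
  intro e he
  rw [HB, edgeSet_fromEdgeSet] at he
  exact he.1

lemma c2B_vB_wB (i : Fin n) : c2B n a b s(vB n i, wB n i) = b i + 2 := by
  simp [c2B, wtB, vB, wB]

lemma c1B_vB_wB (i : Fin n) : c1B n a b s(vB n i, wB n i) = 0 := by
  simp [c1B, wtB, vB, wB]

lemma c2B_vB_pB (i : Fin n) : c2B n a b s(vB n i, pB n i) = 1 := by
  simp [c2B, wtB, vB, pB]

lemma c1B_vB_pB (i : Fin n) : c1B n a b s(vB n i, pB n i) = 0 := by
  simp [c1B, wtB, vB, pB]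

lemma c2B_pB_wB (i : Fin n) : c2B n a b s(pB n i, wB n i) = 1 := by
  simp [c2B, wtB, pB, wB]

lemma c2B_wB_vB {i j : Fin n} (h : (j : ℕ) = i + 1) : c2B n a b s(wB n i, vB n j) = 1 := by
  have hji : j ≠ i := fun e => by rw [e] at h; omega
  simp [c2B, wtB, vB, wB, h, hji]

lemma c1B_wB_vB {i j : Fin n} (h : (j : ℕ) = i + 1) : c1B n a b s(wB n i, vB n j) = 0 := by
  have hji : j ≠ i := fun e => by rw [e] at h; omega
  simp [c1B, wtB, vB, wB, h, hji]

lemma sB_ne_tB (hn : 0 < n) : sB n hn ≠ tB n hn := by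
  simp [sB, tB]

lemma c2B_sB_tB (hn : 0 < n) (hn2 : 2 ≤ n) : c2B n a b s(sB n hn, tB n hn) = 1 := by
  have hne : (⟨0, hn⟩ : Fin n) ≠ ⟨n - 1, by omega⟩ := by simp [Fin.ext_iff]; omega
  simp only [c2B_mk, wtB, sB, tB]
  simp [hne]

lemma wtB_snd_cases (hn : 0 < n) {x y : Vtx n} (h : (wtB n a b x y).2 ≠ 0) :
    (∃ i, x = vB n i ∧ y = wB n i ∧ (wtB n a b x y).2 = b i + 2) ∨
    (∃ i, x = vB n i ∧ y = pB n i ∧ (wtB n a b x y).2 = 1) ∨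
    (∃ i, x = pB n i ∧ y = wB n i ∧ (wtB n a b x y).2 = 1) ∨
    (∃ i j : Fin n, (j : ℕ) = i + 1 ∧ x = wB n i ∧ y = vB n j ∧ (wtB n a b x y).2 = 1) ∨
    (x = sB n hn ∧ y = tB n hn) := by
  obtain ⟨i, k⟩ := x
  obtain ⟨j, l⟩ := y
  unfold wtB at h ⊢
  split_ifs at h ⊢ with h1 h2 h3 h4 h5
  · obtain ⟨rfl, rfl, rfl⟩ := h1
    exact Or.inl ⟨i, rfl, rfl, rfl⟩
  · obtain ⟨rfl, rfl, rfl⟩ := h2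
    exact Or.inr <| Or.inl ⟨i, rfl, rfl, rfl⟩
  · obtain ⟨rfl, rfl, rfl⟩ := h3
    exact Or.inr <| Or.inr <| Or.inl ⟨i, rfl, rfl, rfl⟩
  · obtain ⟨rfl, rfl, hij⟩ := h4
    exact Or.inr <| Or.inr <| Or.inr <| Or.inl ⟨i, j, hij, rfl, rfl, rfl⟩
  · obtain ⟨rfl, rfl, hi, hj, -⟩ := h5
    exact Or.inr <| Or.inr <| Or.inr <| Or.inr
      ⟨Prod.ext (Fin.ext hi) rfl, Prod.ext (Fin.ext hj) rfl⟩
  · exact absurd rfl h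

end Construction

section Spanner

variable (n : ℕ) (b : Fin n → ℕ) (S : Finset (Sym2 (Vtx n)))

/-- The length `mₖ` of the route from `vₖ` to `wₖ` inside `S` (junk value `0` for `k ≥ n`). -/
def segLen (k : ℕ) : ℕ :=
  if h : k < n then (if s(pB n ⟨k, h⟩, wB n ⟨k, h⟩) ∈ S then 2 else b ⟨k, h⟩ + 2) else 0

def prefixLen (k : ℕ) : ℕ := ∑ j ∈ Finset.range k, (segLen n b S j + 1)

/-- The potential `φ`: the `c2`-length of the path `v₁ ⇝ w₁ → v₂ ⇝ ⋯` from `s` to `x` inside `S`. -/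
def pot (x : Vtx n) : ℕ := prefixLen n b S x.1 + ![0, 1, segLen n b S x.1] x.2

variable {n b S}

lemma prefixLen_succ (k : ℕ) : prefixLen n b S (k + 1) = prefixLen n b S k + segLen n b S k + 1 :=
  Finset.sum_range_succ _ _

lemma two_le_segLen {k : ℕ} (hk : k < n) : 2 ≤ segLen n b S k := by
  unfold segLen
  split_ifs <;> omega

lemma segLen_le (i : Fin n) : segLen n b S i ≤ b i + 2 := by
  rw [segLen, dif_pos i.isLt]
  split_ifs <;> simp

lemma segLen_of_mem {i : Fin n} (h : s(pB n i, wB n i) ∈ S) : segLen n b S i = 2 := by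
  simp [segLen, h]

lemma segLen_of_notMem {i : Fin n} (h : s(pB n i, wB n i) ∉ S) : segLen n b S i = b i + 2 := by
  simp [segLen, h]

@[simp] lemma pot_vB (i : Fin n) : pot n b S (vB n i) = prefixLen n b S i := by simp [pot, vB]
@[simp] lemma pot_pB (i : Fin n) : pot n b S (pB n i) = prefixLen n b S i + 1 := by simp [pot, pB]
@[simp] lemma pot_wB (i : Fin n) :
    pot n b S (wB n i) = prefixLen n b S i + segLen n b S i := by simp [pot, wB]

lemma pot_sB (hn : 0 < n) : pot n b S (sB n hn) = 0 := by simp [pot, sB, prefixLen]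

lemma pot_tB (hn : 0 < n) : pot n b S (tB n hn) = prefixLen n b S n - 1 := by
  have h := prefixLen_succ (b := b) (S := S) (n - 1)
  rw [Nat.sub_add_cancel hn] at h
  simp [pot, tB, h]

lemma pot_le_pot_tB (hn : 0 < n) (x : Vtx n) : pot n b S x ≤ pot n b S (tB n hn) := by
  obtain ⟨i, k⟩ := x
  have hmono : prefixLen n b S (i + 1) ≤ prefixLen n b S n :=
    Finset.sum_le_sum_of_subset (Finset.range_subset_range.2 i.isLt)
  have h2 := two_le_segLen (b := b) (S := S) i.isLt
  rw [prefixLen_succ] at hmono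
  rw [pot_tB hn, pot]
  fin_cases k <;> simp <;> omega

lemma segLen_add_one_le_pot_tB (hn2 : 2 ≤ n) (i : Fin n) :
    segLen n b S i + 1 ≤ pot n b S (tB n (by omega)) := by
  set k : ℕ := if (i : ℕ) = 0 then 1 else 0 with hk
  have hki : k ≠ i := by rw [hk]; split_ifs <;> omega
  have hkn : k < n := by rw [hk]; split_ifs <;> omega
  have hpair : segLen n b S i + 1 + (segLen n b S k + 1) ≤ prefixLen n b S n := by
    rw [← Finset.sum_pair (f := fun j => segLen n b S j + 1) hki.symm]
    exact Finset.sum_le_sum_of_subset (by simp [Finset.insert_subset_iff, hkn])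
  have := two_le_segLen (b := b) (S := S) hkn
  rw [pot_tB]
  omega

end Spanner

section Distances

variable {n : ℕ} {a b : Fin n → ℕ} {S : Finset (Sym2 (Vtx n))}

lemma mem_of_c1B_eq_zero (hzero : ∀ e ∈ (HB n a b).edgeSet, c1B n a b e = 0 → e ∈ S)
    {x y : Vtx n} (hc2 : c2B n a b s(x, y) ≠ 0) (hxy : x ≠ y) (hc1 : c1B n a b s(x, y) = 0) :
    s(x, y) ∈ S :=
  hzero _ (mem_edgeSet_HB.2 ⟨hc2, hxy⟩) hc1

lemma two_le_of_sB_tB_notMem (hn : 0 < n)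
    (hzero : ∀ e ∈ (HB n a b).edgeSet, c1B n a b e = 0 → e ∈ S)
    (hst : s(sB n hn, tB n hn) ∉ S) : 2 ≤ n := by
  by_contra! h
  obtain rfl : n = 1 := by omega
  exact hst (mem_of_c1B_eq_zero hzero (by simp [sB, tB, c2B, wtB]) (by simp [sB, tB])
    (by simp [sB, tB, c1B, wtB]))

variable (hspan : IsSpanner (HB n a b) (↑S : Set (Sym2 (Vtx n))))
  (hzero : ∀ e ∈ (HB n a b).edgeSet, c1B n a b e = 0 → e ∈ S)

include hzero

lemma wdist_vB_pB_le (i : Fin n) : wdist (↑S) (c2B n a b) (vB n i) (pB n i) ≤ 1 := by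
  have hne : vB n i ≠ pB n i := by simp [vB, pB]
  have h := mem_of_c1B_eq_zero hzero (by simp [c2B_vB_pB]) hne (c1B_vB_pB i)
  simpa [c2B_vB_pB] using wdist_le_of_mem (c2 := c2B n a b) h hne

lemma wdist_wB_vB_le {i j : Fin n} (hij : (j : ℕ) = i + 1) :
    wdist (↑S) (c2B n a b) (wB n i) (vB n j) ≤ 1 := by
  have hne : wB n i ≠ vB n j := by simp [vB, wB]
  have h := mem_of_c1B_eq_zero hzero (by simp [c2B_wB_vB hij]) hne (c1B_wB_vB hij)
  simpa [c2B_wB_vB hij] using wdist_le_of_mem (c2 := c2B n a b) h hne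

include hspan

lemma wdist_vB_wB_le (i : Fin n) :
    wdist (↑S) (c2B n a b) (vB n i) (wB n i) ≤ segLen n b S i := by
  by_cases hpw : s(pB n i, wB n i) ∈ S
  · have hpw' := wdist_le_of_mem (c2 := c2B n a b) (F := ↑S) hpw (by simp [pB, wB])
    have := wdist_triangle (c2 := c2B n a b) (hspan.reachable (vB n i) (pB n i))
      (hspan.reachable (pB n i) (wB n i))
    have := wdist_vB_pB_le hzero i
    rw [segLen_of_mem hpw]
    rw [c2B_pB_wB] at hpw'
    omega
  · have hne : vB n i ≠ wB n i := by simp [vB, wB]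
    have h := mem_of_c1B_eq_zero hzero (by simp [c2B_vB_wB]) hne (c1B_vB_wB i)
    rw [segLen_of_notMem hpw, ← c2B_vB_wB (a := a)]
    exact wdist_le_of_mem h hne

lemma wdist_pB_wB_le (i : Fin n) :
    wdist (↑S) (c2B n a b) (pB n i) (wB n i) ≤ segLen n b S i + 1 := by
  have := wdist_triangle (c2 := c2B n a b) (hspan.reachable (pB n i) (vB n i))
    (hspan.reachable (vB n i) (wB n i))
  have := wdist_vB_wB_le hspan hzero i
  have h := wdist_vB_pB_le hzero i
  rw [wdist_comm] at h
  omega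

lemma wdist_sB_vB_le (hn : 0 < n) (k : ℕ) (hk : k < n) :
    wdist (↑S) (c2B n a b) (sB n hn) (vB n ⟨k, hk⟩) ≤ prefixLen n b S k := by
  induction k with
  | zero => exact (wdist_self).le.trans (Nat.zero_le _)
  | succ k ih =>
    have hk' : k < n := by omega
    have h1 := wdist_triangle (c2 := c2B n a b) (hspan.reachable (sB n hn) (vB n ⟨k, hk'⟩))
      (hspan.reachable _ (wB n ⟨k, hk'⟩))
    have h2 := wdist_triangle (c2 := c2B n a b) (hspan.reachable (sB n hn) (wB n ⟨k, hk'⟩))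
      (hspan.reachable _ (vB n ⟨k + 1, hk⟩))
    have := ih hk'
    have : _ ≤ segLen n b S k := wdist_vB_wB_le hspan hzero ⟨k, hk'⟩
    have := wdist_wB_vB_le (S := S) hzero (i := ⟨k, hk'⟩) (j := ⟨k + 1, hk⟩) rfl
    rw [prefixLen_succ]
    omega

lemma wdist_sB_le_pot (hn : 0 < n) (x : Vtx n) :
    wdist (↑S) (c2B n a b) (sB n hn) x ≤ pot n b S x := by
  obtain ⟨i, k⟩ := x
  have hv : wdist (↑S) (c2B n a b) (sB n hn) (vB n i) ≤ prefixLen n b S i :=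
    wdist_sB_vB_le hspan hzero hn i i.isLt
  have ht := fun y => wdist_triangle (c2 := c2B n a b) (hspan.reachable (sB n hn) (vB n i))
    (hspan.reachable (vB n i) y)
  fin_cases k
  · change wdist (↑S) (c2B n a b) (sB n hn) (vB n i) ≤ pot n b S (vB n i)
    rwa [pot_vB]
  · change wdist (↑S) (c2B n a b) (sB n hn) (pB n i) ≤ pot n b S (pB n i)
    have := ht (pB n i)
    have := wdist_vB_pB_le hzero i
    rw [pot_pB]
    omega
  · change wdist (↑S) (c2B n a b) (sB n hn) (wB n i) ≤ pot n b S (wB n i)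
    have := ht (wB n i)
    have := wdist_vB_wB_le hspan hzero i
    rw [pot_wB]
    omega

end Distances

section Stretch

variable {n : ℕ} {a b : Fin n → ℕ} {S : Finset (Sym2 (Vtx n))}

lemma wdist_edgeSet_sB_tB (hn : 0 < n) (hn2 : 2 ≤ n) :
    wdist (HB n a b).edgeSet (c2B n a b) (sB n hn) (tB n hn) = 1 := by
  have hst : s(sB n hn, tB n hn) ∈ (HB n a b).edgeSet :=
    mem_edgeSet_HB.2 ⟨by simp [c2B_sB_tB hn hn2], sB_ne_tB hn⟩
  refine le_antisymm ?_ (one_le_wdist c2B_ne_zero_of_mem_edgeSet (sB_ne_tB hn) ?_)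
  · simpa [c2B_sB_tB hn hn2] using wdist_le_of_mem (c2 := c2B n a b) hst (sB_ne_tB hn)
  · exact ((fromEdgeSet_adj _).2 ⟨hst, sB_ne_tB hn⟩).reachable

variable (hn : 0 < n) (hspan : IsSpanner (HB n a b) (↑S : Set (Sym2 (Vtx n))))
  (hzero : ∀ e ∈ (HB n a b).edgeSet, c1B n a b e = 0 → e ∈ S)
  (hst : s(sB n hn, tB n hn) ∉ S)

include hst

lemma pot_le_pot_add_wtB {x y : Vtx n} (hxy : s(x, y) ∈ S) (h : (wtB n a b x y).2 ≠ 0) :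
    pot n b S y ≤ pot n b S x + (wtB n a b x y).2 ∧
      pot n b S x ≤ pot n b S y + (wtB n a b x y).2 := by
  rcases wtB_snd_cases hn h with ⟨i, rfl, rfl, hw⟩ | ⟨i, rfl, rfl, hw⟩ | ⟨i, rfl, rfl, hw⟩ |
    ⟨i, j, hij, rfl, rfl, hw⟩ | ⟨rfl, rfl⟩
  · have := segLen_le (b := b) (S := S) i
    simp only [pot_vB, pot_wB, hw]
    omega
  · simp only [pot_vB, pot_pB, hw]
    omega
  · simp only [pot_pB, pot_wB, hw, segLen_of_mem hxy]
    omega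
  · have : prefixLen n b S j = prefixLen n b S i + segLen n b S i + 1 := by
      rw [hij, prefixLen_succ]
    simp only [pot_wB, pot_vB, hw, this]
    omega
  · exact absurd hxy hst

include hspan

lemma pot_le_pot_add_c2B {x y : Vtx n} (hadj : (fromEdgeSet (↑S : Set (Sym2 (Vtx n)))).Adj x y) :
    pot n b S y ≤ pot n b S x + c2B n a b s(x, y) := by
  have hxy := ((fromEdgeSet_adj _).1 hadj).1
  have hc := c2B_ne_zero_of_mem_edgeSet _ (hspan.1 hxy)
  rw [c2B_mk] at hc ⊢
  by_cases h : (wtB n a b x y).2 = 0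
  · have hyx : s(y, x) ∈ S := by rwa [Sym2.eq_swap]
    have hne : (wtB n a b y x).2 ≠ 0 := by omega
    have := (pot_le_pot_add_wtB hn hst hyx hne).2
    omega
  · have := (pot_le_pot_add_wtB hn hst hxy h).1
    omega

lemma pot_tB_le_wdist : pot n b S (tB n hn) ≤ wdist (↑S) (c2B n a b) (sB n hn) (tB n hn) := by
  simpa [pot_sB] using le_add_wdist_of_forall_adj (pot n b S)
    (fun _ _ => pot_le_pot_add_c2B hn hspan hst) (hspan.reachable (sB n hn) (tB n hn))

include hzero

lemma wdist_sB_le_wdist_sB_tB (x : Vtx n) :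
    wdist (↑S) (c2B n a b) (sB n hn) x ≤ wdist (↑S) (c2B n a b) (sB n hn) (tB n hn) :=
  (wdist_sB_le_pot hspan hzero hn x).trans
    ((pot_le_pot_tB hn x).trans (pot_tB_le_wdist hn hspan hst))

lemma wdist_le_wdist_sB_tB_of_wtB {u v : Vtx n} (h : (wtB n a b u v).2 = 1) :
    wdist (↑S) (c2B n a b) u v ≤ wdist (↑S) (c2B n a b) (sB n hn) (tB n hn) := by
  have hn2 := two_le_of_sB_tB_notMem hn hzero hst
  have hpos := one_le_wdist (fun e he => c2B_ne_zero_of_mem_edgeSet e (hspan.1 he)) (sB_ne_tB hn)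
    (hspan.reachable (sB n hn) (tB n hn))
  rcases wtB_snd_cases hn (h ▸ one_ne_zero) with ⟨i, rfl, rfl, hw⟩ | ⟨i, rfl, rfl, -⟩ |
    ⟨i, rfl, rfl, -⟩ | ⟨i, j, hij, rfl, rfl, -⟩ | ⟨rfl, rfl⟩
  · omega
  · exact (wdist_vB_pB_le hzero i).trans hpos
  · exact (wdist_pB_wB_le hspan hzero i).trans
      ((segLen_add_one_le_pot_tB hn2 i).trans (pot_tB_le_wdist hn hspan hst))
  · exact (wdist_wB_vB_le hzero hij).trans hpos
  · exact le_rfl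

lemma wdist_le_mul_wdist_edgeSet {u v : Vtx n} (huv : u ≠ v) :
    wdist (↑S) (c2B n a b) u v ≤
      wdist (↑S) (c2B n a b) (sB n hn) (tB n hn) * wdist (HB n a b).edgeSet (c2B n a b) u v := by
  rcases (one_le_wdist c2B_ne_zero_of_mem_edgeSet huv (hspan.reachable_edgeSet u v)).eq_or_lt
    with h1 | h2
  · have hc := c2_eq_one_of_wdist_eq_one c2B_ne_zero_of_mem_edgeSet huv
      (hspan.reachable_edgeSet u v) h1.symm
    rw [← h1, mul_one]
    rw [c2B_mk] at hc
    by_cases h : (wtB n a b u v).2 = 1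
    · exact wdist_le_wdist_sB_tB_of_wtB hn hspan hzero hst h
    · rw [wdist_comm]
      exact wdist_le_wdist_sB_tB_of_wtB hn hspan hzero hst (by omega)
  · have := wdist_sB_le_wdist_sB_tB hn hspan hzero hst u
    have := wdist_sB_le_wdist_sB_tB hn hspan hzero hst v
    calc wdist (↑S) (c2B n a b) u v
        ≤ wdist (↑S) (c2B n a b) u (sB n hn) + wdist (↑S) (c2B n a b) (sB n hn) v :=
          wdist_triangle (hspan.reachable _ _) (hspan.reachable _ _)
      _ ≤ wdist (↑S) (c2B n a b) (sB n hn) (tB n hn) * 2 := by rw [wdist_comm]; omega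
      _ ≤ _ := Nat.mul_le_mul_left _ h2

end Stretch

theorem stretch_attained_at_st_HB_general (n : ℕ) (hn : 0 < n) (a b : Fin n → ℕ)
    (S : Finset (Sym2 (Vtx n))) (hspan : IsSpanner (HB n a b) (↑S))
    (hzero : ∀ e ∈ (HB n a b).edgeSet, c1B n a b e = 0 → e ∈ S)
    (hst : s(sB n hn, tB n hn) ∉ S) :
    f2 (HB n a b).edgeSet (↑S) (c2B n a b) =
        (wdist (↑S) (c2B n a b) (sB n hn) (tB n hn) : ℚ) /
          (wdist (HB n a b).edgeSet (c2B n a b) (sB n hn) (tB n hn) : ℚ) ∧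
      f2 (HB n a b).edgeSet (↑S) (c2B n a b) =
        (wdist (↑S) (c2B n a b) (sB n hn) (tB n hn) : ℚ) ∧
      wdist (HB n a b).edgeSet (c2B n a b) (sB n hn) (tB n hn) = 1 := by
  have hE := wdist_edgeSet_sB_tB (a := a) (b := b) hn (two_le_of_sB_tB_notMem hn hzero hst)
  have hf2 := f2_eq_of_forall_le (E := (HB n a b).edgeSet) (S := ↑S) (sB_ne_tB hn)
    fun u v huv => by
      rw [hE, Nat.cast_one, div_one]
      exact div_le_of_le_mul₀ (Nat.cast_nonneg _) (Nat.cast_nonneg _)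
        (mod_cast wdist_le_mul_wdist_edgeSet hn hspan hzero hst huv)
  exact ⟨hf2, by rw [hf2, hE, Nat.cast_one, div_one], hE⟩

/-- For every spanner `S` of `H` containing all edges of zero `c1`-cost
and not containing `{s, t}`, the stretch factor is attained at the pair `(s, t)`:
`f2(S) = d^S(s,t)/d^E(s,t) = d^S(s,t)`, and in particular `d^E(s,t) = 1`. -/
theorem stretch_attained_at_st_HB (n : ℕ) (hn : 0 < n) (a b : Fin n → ℕ)
    (ha : ∀ i, 0 < a i) (hb : ∀ i, 0 < b i)
    (S : Finset (Sym2 (Vtx n))) (hspan : IsSpanner (HB n a b) (↑S))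
    (hzero : ∀ e ∈ (HB n a b).edgeSet, c1B n a b e = 0 → e ∈ S)
    (hst : s(sB n hn, tB n hn) ∉ S) :
    f2 (HB n a b).edgeSet (↑S) (c2B n a b) =
        (wdist (↑S) (c2B n a b) (sB n hn) (tB n hn) : ℚ) /
          (wdist (HB n a b).edgeSet (c2B n a b) (sB n hn) (tB n hn) : ℚ) ∧
      f2 (HB n a b).edgeSet (↑S) (c2B n a b) =
        (wdist (↑S) (c2B n a b) (sB n hn) (tB n hn) : ℚ) ∧
      wdist (HB n a b).edgeSet (c2B n a b) (sB n hn) (tB n hn) = 1 :=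
  stretch_attained_at_st_HB_general n hn a b S hspan hzero hst

end MSpPaper
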